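/- The elliptic Gamma duplication formula holds: Γ(x^2; p, q) = Γ(x; p,q) Γ(-x; p,q) Γ(p^{1/2} x; p,q) Γ(-p^{1/2} x; p,q) Γ(q^{1/2} x; p,q) Γ(-q^{1/2} x; p,q) Γ(p^{1/2} q^{1/2} x; p,q) Γ(-p^{1/2} q^{1/2} x; p,q). -/

import Mathlib

noncomputable def eGamma (p q x : ℂ) : ℂ :=
  ∏' ij : ℕ × ℕ, (1 - p ^ (ij.1 + 1) * q ^ (ij.2 + 1) * x⁻¹) / (1 - p ^ ij.1 * q ^ ij.2 * x)

open Filter Complex Topology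

private noncomputable def eterm (p q y : ℂ) (ij : ℕ × ℕ) : ℂ :=
  (1 - p ^ (ij.1 + 1) * q ^ (ij.2 + 1) * y⁻¹) / (1 - p ^ ij.1 * q ^ ij.2 * y)

private lemma hasProd_zero_of_exists' {ι : Type*} {f : ι → ℂ} (h : ∃ i, f i = 0) :
    HasProd f 0 := by
  obtain ⟨i0, h0⟩ := h
  have hev : ∀ᶠ s : Finset ι in atTop, ∏ i ∈ s, f i = 0 := by
    filter_upwards [Filter.eventually_ge_atTop ({i0} : Finset ι)] with s hs
    exact Finset.prod_eq_zero (hs (Finset.mem_singleton_self i0)) h0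
  exact Tendsto.congr' (by filter_upwards [hev] with s hs; exact hs.symm) tendsto_const_nhds

private lemma multipliable_eGammaTerm (p q y : ℂ) (hp : ‖p‖ < 1)
    (hq : ‖q‖ < 1) (hden : ∀ i j : ℕ, 1 - p ^ i * q ^ j * y ≠ 0) :
    Multipliable (fun ij : ℕ × ℕ =>
      (1 - p ^ (ij.1 + 1) * q ^ (ij.2 + 1) * y⁻¹) / (1 - p ^ ij.1 * q ^ ij.2 * y)) := by
  obtain ⟨f, hf⟩ : ∃ f : ℕ × ℕ → ℂ, f = fun ij : ℕ × ℕ =>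
      (1 - p ^ (ij.1 + 1) * q ^ (ij.2 + 1) * y⁻¹) / (1 - p ^ ij.1 * q ^ ij.2 * y) := ⟨_, rfl⟩
  rw [← hf]
  by_cases hzero : ∃ ij : ℕ × ℕ, 1 - p ^ (ij.1 + 1) * q ^ (ij.2 + 1) * y⁻¹ = 0
  · obtain ⟨ij0, h0⟩ := hzero
    exact ⟨0, hasProd_zero_of_exists' ⟨ij0, by simp [hf, h0]⟩⟩
  push_neg at hzero
  have hfn : ∀ ij : ℕ × ℕ, f ij ≠ 0 := fun ij => by
    rw [hf]; exact div_ne_zero (hzero ij) (hden ij.1 ij.2)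
  obtain ⟨t, ht⟩ : ∃ t : ℕ × ℕ → ℝ, t = fun ij : ℕ × ℕ =>
      ‖p‖ ^ ij.1 * ‖q‖ ^ ij.2 := ⟨_, rfl⟩
  have htsum : Summable t := by
    rw [ht]
    exact (summable_geometric_of_lt_one (norm_nonneg p) hp).mul_of_nonneg
      (summable_geometric_of_lt_one (norm_nonneg q) hq)
      (fun n => pow_nonneg (norm_nonneg p) n)
      (fun n => pow_nonneg (norm_nonneg q) n)
  have htnonneg : ∀ ij : ℕ × ℕ, 0 ≤ t ij := fun ij => by
    rw [ht]
    exact mul_nonneg (pow_nonneg (norm_nonneg p) _) (pow_nonneg (norm_nonneg q) _)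
  obtain ⟨K, hK⟩ : ∃ K : ℝ, K = ‖y‖ + ‖y⁻¹‖ := ⟨_, rfl⟩
  have hK0 : 0 ≤ K := by rw [hK]; positivity
  have hbd : ∀ ij : ℕ × ℕ, ‖p ^ ij.1 * q ^ ij.2 * y
      - p ^ (ij.1 + 1) * q ^ (ij.2 + 1) * y⁻¹‖ ≤ K * t ij := by
    intro ij
    have h1 : ‖p ^ ij.1 * q ^ ij.2 * y‖ = t ij * ‖y‖ := by
      rw [ht]; simp [map_mul, map_pow]
    have h2 : ‖p ^ (ij.1 + 1) * q ^ (ij.2 + 1) * y⁻¹‖ ≤ t ij * ‖y⁻¹‖ := by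
      have heq : ‖p ^ (ij.1 + 1) * q ^ (ij.2 + 1) * y⁻¹‖
          = ‖p‖ ^ (ij.1 + 1) * ‖q‖ ^ (ij.2 + 1) * ‖y⁻¹‖ := by
        simp [map_mul, map_pow]
      rw [heq, ht]
      have hp1 : ‖p‖ ^ (ij.1 + 1) ≤ ‖p‖ ^ ij.1 :=
        pow_le_pow_of_le_one (norm_nonneg p) hp.le (Nat.le_succ _)
      have hq1 : ‖q‖ ^ (ij.2 + 1) ≤ ‖q‖ ^ ij.2 :=
        pow_le_pow_of_le_one (norm_nonneg q) hq.le (Nat.le_succ _)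
      simp only
      exact mul_le_mul_of_nonneg_right (mul_le_mul hp1 hq1 (by positivity) (by positivity))
        (norm_nonneg _)
    calc ‖p ^ ij.1 * q ^ ij.2 * y - p ^ (ij.1 + 1) * q ^ (ij.2 + 1) * y⁻¹‖
        ≤ ‖p ^ ij.1 * q ^ ij.2 * y‖
          + ‖p ^ (ij.1 + 1) * q ^ (ij.2 + 1) * y⁻¹‖ := norm_sub_le _ _
      _ ≤ t ij * ‖y‖ + t ij * ‖y⁻¹‖ := by rw [h1]; gcongr
      _ = K * t ij := by rw [hK]; ring
  have hcof : Tendsto t cofinite (𝓝 0) := htsum.tendsto_cofinite_zero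
  have ev1 : ∀ᶠ ij in cofinite, t ij * ‖y‖ ≤ 1 / 2 := by
    have h := (hcof.mul_const (‖y‖)).eventually_lt_const
      (by norm_num : (0:ℝ) * ‖y‖ < 1/2)
    filter_upwards [h] with ij h'
    exact h'.le
  have ev2 : ∀ᶠ ij in cofinite, 2 * (K * t ij) ≤ 1 / 2 := by
    have h := ((hcof.const_mul K).const_mul 2).eventually_lt_const
      (by norm_num : (2:ℝ) * (K * 0) < 1/2)
    filter_upwards [h] with ij h'
    exact h'.le
  have hlog : Summable fun ij : ℕ × ℕ => Complex.log (f ij) := by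
    apply Summable.of_norm_bounded_eventually (htsum.mul_left (3 * K))
    filter_upwards [ev1, ev2] with ij h1 h2
    have hd := hden ij.1 ij.2
    have hdiffeq : f ij - 1 = (p ^ ij.1 * q ^ ij.2 * y - p ^ (ij.1 + 1) * q ^ (ij.2 + 1) * y⁻¹)
        / (1 - p ^ ij.1 * q ^ ij.2 * y) := by
      rw [hf]
      simp only
      rw [div_sub_one hd]
      congr 1
      ring
    have hbabs : ‖p ^ ij.1 * q ^ ij.2 * y‖ ≤ 1 / 2 := by
      have heq : ‖p ^ ij.1 * q ^ ij.2 * y‖ = t ij * ‖y‖ := by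
        rw [ht]; simp [map_mul, map_pow]
      rw [heq]; exact h1
    have hdenlb : (1:ℝ) / 2 ≤ ‖1 - p ^ ij.1 * q ^ ij.2 * y‖ := by
      have h' := norm_sub_norm_le (1 : ℂ) (p ^ ij.1 * q ^ ij.2 * y)
      simp only [norm_one] at h'
      linarith
    have hKt : 0 ≤ K * t ij := mul_nonneg hK0 (htnonneg ij)
    have hdiff : ‖f ij - 1‖ ≤ 2 * (K * t ij) := by
      rw [hdiffeq, norm_div, div_le_iff₀ (by linarith)]
      calc ‖p ^ ij.1 * q ^ ij.2 * y - p ^ (ij.1 + 1) * q ^ (ij.2 + 1) * y⁻¹‖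
          ≤ K * t ij := hbd ij
        _ = 2 * (K * t ij) * (1/2) := by ring
        _ ≤ 2 * (K * t ij) * ‖1 - p ^ ij.1 * q ^ ij.2 * y‖ :=
            mul_le_mul_of_nonneg_left hdenlb (by linarith)
    have hhalf : ‖f ij - 1‖ ≤ 1 / 2 := by
      linarith
    have hlog1 := Complex.norm_log_one_add_half_le_self hhalf
    rw [add_sub_cancel] at hlog1
    calc ‖Complex.log (f ij)‖ ≤ 3 / 2 * ‖f ij - 1‖ := hlog1
      _ ≤ 3 / 2 * (2 * (K * t ij)) := by gcongr
      _ = 3 * K * t ij := by ring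
  exact Complex.multipliable_of_summable_log hlog

private lemma aux_sp (s c x : ℂ) (k : ℕ) : (s^2)^(k+1) * c * (s*x)⁻¹ = s^(2*k+1) * c * x⁻¹ := by
  rcases eq_or_ne s 0 with h | h
  · simp [h, zero_pow]
  · rw [mul_inv, show (s^2)^(k+1) * c * (s⁻¹ * x⁻¹) = (s * s⁻¹) * (s^(2*k+1) * c * x⁻¹) by ring,
      mul_inv_cancel₀ h, one_mul]

private lemma aux_sq (s c x : ℂ) (k : ℕ) : c * (s^2)^(k+1) * (s*x)⁻¹ = c * s^(2*k+1) * x⁻¹ := by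
  rw [mul_comm c, mul_comm c, aux_sp]

private lemma aux_spsq (s t x : ℂ) (k l : ℕ) :
    (s^2)^(k+1) * (t^2)^(l+1) * (s*t*x)⁻¹ = s^(2*k+1) * t^(2*l+1) * x⁻¹ := by
  rcases eq_or_ne s 0 with h | h
  · simp [h, zero_pow]
  rcases eq_or_ne t 0 with h' | h'
  · simp [h', zero_pow]
  rw [mul_inv, mul_inv, show (s^2)^(k+1) * (t^2)^(l+1) * (s⁻¹ * t⁻¹ * x⁻¹)
      = (s * s⁻¹) * ((t * t⁻¹) * (s^(2*k+1) * t^(2*l+1) * x⁻¹)) by ring,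
    mul_inv_cancel₀ h, mul_inv_cancel₀ h', one_mul, one_mul]

private lemma term_identity (p q x sp sq : ℂ) (hsp : sp ^ 2 = p) (hsq : sq ^ 2 = q)
    (hpole : ∀ y ∈ ({x ^ 2, x, -x, sp * x, -(sp * x), sq * x, -(sq * x),
        sp * sq * x, -(sp * sq * x)} : Set ℂ), ∀ i j : ℕ, 1 - p ^ i * q ^ j * y ≠ 0)
    (i j : ℕ) :
    (1 - p ^ (i+1) * q ^ (j+1) * x⁻¹) / (1 - p ^ i * q ^ j * x) *
      ((1 - p ^ (i+1) * q ^ (j+1) * (-x)⁻¹) / (1 - p ^ i * q ^ j * (-x))) *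
      ((1 - p ^ (i+1) * q ^ (j+1) * (sp * x)⁻¹) / (1 - p ^ i * q ^ j * (sp * x))) *
      ((1 - p ^ (i+1) * q ^ (j+1) * (-(sp * x))⁻¹) / (1 - p ^ i * q ^ j * (-(sp * x)))) *
      ((1 - p ^ (i+1) * q ^ (j+1) * (sq * x)⁻¹) / (1 - p ^ i * q ^ j * (sq * x))) *
      ((1 - p ^ (i+1) * q ^ (j+1) * (-(sq * x))⁻¹) / (1 - p ^ i * q ^ j * (-(sq * x)))) *
      ((1 - p ^ (i+1) * q ^ (j+1) * (sp * sq * x)⁻¹) / (1 - p ^ i * q ^ j * (sp * sq * x))) *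
      ((1 - p ^ (i+1) * q ^ (j+1) * (-(sp * sq * x))⁻¹) / (1 - p ^ i * q ^ j * (-(sp * sq * x)))) =
    (1 - p ^ (2*i+1) * q ^ (2*j+1) * (x^2)⁻¹) / (1 - p ^ (2*i) * q ^ (2*j) * x^2) *
      ((1 - p ^ (2*i+1+1) * q ^ (2*j+1) * (x^2)⁻¹) / (1 - p ^ (2*i+1) * q ^ (2*j) * x^2)) *
      ((1 - p ^ (2*i+1) * q ^ (2*j+1+1) * (x^2)⁻¹) / (1 - p ^ (2*i) * q ^ (2*j+1) * x^2)) *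
      ((1 - p ^ (2*i+1+1) * q ^ (2*j+1+1) * (x^2)⁻¹) / (1 - p ^ (2*i+1) * q ^ (2*j+1) * x^2)) := by
  have d1 : 1 - p ^ i * q ^ j * x ≠ 0 := hpole x (by simp) i j
  have d2 : 1 - p ^ i * q ^ j * (-x) ≠ 0 := hpole (-x) (by simp) i j
  have d3 : 1 - p ^ i * q ^ j * (sp * x) ≠ 0 := hpole (sp * x) (by simp) i j
  have d4 : 1 - p ^ i * q ^ j * (-(sp * x)) ≠ 0 := hpole (-(sp * x)) (by simp) i j
  have d5 : 1 - p ^ i * q ^ j * (sq * x) ≠ 0 := hpole (sq * x) (by simp) i j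
  have d6 : 1 - p ^ i * q ^ j * (-(sq * x)) ≠ 0 := hpole (-(sq * x)) (by simp) i j
  have d7 : 1 - p ^ i * q ^ j * (sp * sq * x) ≠ 0 := hpole (sp * sq * x) (by simp) i j
  have d8 : 1 - p ^ i * q ^ j * (-(sp * sq * x)) ≠ 0 := hpole (-(sp * sq * x)) (by simp) i j
  have D1 : 1 - p ^ (2*i) * q ^ (2*j) * x ^ 2 ≠ 0 := hpole (x ^ 2) (by simp) (2*i) (2*j)
  have D2 : 1 - p ^ (2*i+1) * q ^ (2*j) * x ^ 2 ≠ 0 := hpole (x ^ 2) (by simp) (2*i+1) (2*j)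
  have D3 : 1 - p ^ (2*i) * q ^ (2*j+1) * x ^ 2 ≠ 0 := hpole (x ^ 2) (by simp) (2*i) (2*j+1)
  have D4 : 1 - p ^ (2*i+1) * q ^ (2*j+1) * x ^ 2 ≠ 0 := hpole (x ^ 2) (by simp) (2*i+1) (2*j+1)
  subst hsp
  subst hsq
  simp only [inv_neg, mul_neg, sub_neg_eq_add, aux_spsq, aux_sp, aux_sq, ← inv_pow]
    at d1 d2 d3 d4 d5 d6 d7 d8 D1 D2 D3 D4 ⊢
  rw [div_mul_div_comm, div_mul_div_comm, div_mul_div_comm, div_mul_div_comm, div_mul_div_comm,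
    div_mul_div_comm, div_mul_div_comm, div_mul_div_comm, div_mul_div_comm, div_mul_div_comm,
    div_eq_div_iff
      (by exact mul_ne_zero (mul_ne_zero (mul_ne_zero (mul_ne_zero (mul_ne_zero (mul_ne_zero
        (mul_ne_zero d1 d2) d3) d4) d5) d6) d7) d8)
      (by exact mul_ne_zero (mul_ne_zero (mul_ne_zero D1 D2) D3) D4)]
  ring

private def dupEquiv : (ℕ × ℕ) × Bool × Bool ≃ ℕ × ℕ where
  toFun w := (2 * w.1.1 + (if w.2.1 then 1 else 0), 2 * w.1.2 + (if w.2.2 then 1 else 0))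
  invFun n := ((n.1 / 2, n.2 / 2), (decide (n.1 % 2 = 1), decide (n.2 % 2 = 1)))
  left_inv := by
    rintro ⟨⟨a, b⟩, c, d⟩
    cases c <;> cases d <;> simp [Prod.ext_iff] <;> omega
  right_inv := by
    rintro ⟨m, n⟩
    rcases Nat.mod_two_eq_zero_or_one m with h | h <;>
      rcases Nat.mod_two_eq_zero_or_one n with h' | h' <;>
      simp [Prod.ext_iff, h, h'] <;> omega

set_option maxHeartbeats 2000000 in
theorem eGamma_duplication (p q x sp sq : ℂ) (hp : ‖p‖ < 1)
    (hq : ‖q‖ < 1) (hx : x ≠ 0) (hsp : sp ^ 2 = p) (hsq : sq ^ 2 = q)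
    (hpole : ∀ y ∈ ({x ^ 2, x, -x, sp * x, -(sp * x), sq * x, -(sq * x),
        sp * sq * x, -(sp * sq * x)} : Set ℂ), ∀ i j : ℕ, 1 - p ^ i * q ^ j * y ≠ 0) :
    eGamma p q (x ^ 2) =
      eGamma p q x * eGamma p q (-x) * eGamma p q (sp * x) * eGamma p q (-(sp * x)) *
        eGamma p q (sq * x) * eGamma p q (-(sq * x)) *
        eGamma p q (sp * sq * x) * eGamma p q (-(sp * sq * x)) := by
  have hm : ∀ y ∈ ({x ^ 2, x, -x, sp * x, -(sp * x), sq * x, -(sq * x),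
      sp * sq * x, -(sp * sq * x)} : Set ℂ), Multipliable (eterm p q y) := fun y hy =>
    multipliable_eGammaTerm p q y hp hq (hpole y hy)
  have m0 : Multipliable (eterm p q (x ^ 2)) := hm (x ^ 2) (by simp)
  have m1 : Multipliable (eterm p q x) := hm x (by simp)
  have m2 : Multipliable (eterm p q (-x)) := hm (-x) (by simp)
  have m3 : Multipliable (eterm p q (sp * x)) := hm (sp * x) (by simp)
  have m4 : Multipliable (eterm p q (-(sp * x))) := hm (-(sp * x)) (by simp)
  have m5 : Multipliable (eterm p q (sq * x)) := hm (sq * x) (by simp)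
  have m6 : Multipliable (eterm p q (-(sq * x))) := hm (-(sq * x)) (by simp)
  have m7 : Multipliable (eterm p q (sp * sq * x)) := hm (sp * sq * x) (by simp)
  have m8 : Multipliable (eterm p q (-(sp * sq * x))) := hm (-(sp * sq * x)) (by simp)
  have hG : ∀ y : ℂ, eGamma p q y = ∏' ij : ℕ × ℕ, eterm p q y ij := fun y => rfl
  rw [hG, hG, hG, hG, hG, hG, hG, hG, hG]
  rw [← Multipliable.tprod_mul m1 m2, ← Multipliable.tprod_mul (m1.mul m2) m3, ← Multipliable.tprod_mul ((m1.mul m2).mul m3) m4,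
    ← Multipliable.tprod_mul (((m1.mul m2).mul m3).mul m4) m5,
    ← Multipliable.tprod_mul ((((m1.mul m2).mul m3).mul m4).mul m5) m6,
    ← Multipliable.tprod_mul (((((m1.mul m2).mul m3).mul m4).mul m5).mul m6) m7,
    ← Multipliable.tprod_mul ((((((m1.mul m2).mul m3).mul m4).mul m5).mul m6).mul m7) m8]
  have hterm : ∀ ij : ℕ × ℕ,
      eterm p q x ij * eterm p q (-x) ij * eterm p q (sp * x) ij * eterm p q (-(sp * x)) ij *
        eterm p q (sq * x) ij * eterm p q (-(sq * x)) ij * eterm p q (sp * sq * x) ij *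
        eterm p q (-(sp * sq * x)) ij =
      eterm p q (x ^ 2) (2 * ij.1, 2 * ij.2) * eterm p q (x ^ 2) (2 * ij.1 + 1, 2 * ij.2) *
        eterm p q (x ^ 2) (2 * ij.1, 2 * ij.2 + 1) *
        eterm p q (x ^ 2) (2 * ij.1 + 1, 2 * ij.2 + 1) := fun ij =>
    term_identity p q x sp sq hsp hsq hpole ij.1 ij.2
  rw [tprod_congr hterm]
  have hcomp : Multipliable (eterm p q (x ^ 2) ∘ dupEquiv) := dupEquiv.multipliable_iff.mpr m0
  have h2 := Multipliable.tprod_prod' hcomp (fun b => ⟨_, hasProd_fintype _⟩)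
  simp only [Function.comp_apply] at h2
  have h3 : ∀ ij : ℕ × ℕ, ∏' bc : Bool × Bool, eterm p q (x ^ 2) (dupEquiv (ij, bc)) =
      eterm p q (x ^ 2) (2 * ij.1, 2 * ij.2) * eterm p q (x ^ 2) (2 * ij.1 + 1, 2 * ij.2) *
        eterm p q (x ^ 2) (2 * ij.1, 2 * ij.2 + 1) *
        eterm p q (x ^ 2) (2 * ij.1 + 1, 2 * ij.2 + 1) := by
    intro ij
    rw [tprod_fintype, Fintype.prod_prod_type]
    simp [dupEquiv, Fintype.prod_bool]
    ring
  rw [← tprod_congr h3, ← h2, dupEquiv.tprod_eq (eterm p q (x ^ 2))]
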